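/- Let r ≥ 3 and t ≥ 1 be integers and let α ∈ (0,1) be the unique real number in (0,1) satisfying α = 1/2 + α^r/2. Then for all integers n, k with n ≥ 2k, every r-wise t-intersecting family 𝓕 of k-element subsets of [n] satisfies |𝓕| ≤ α^t · C(n,k). -/

import Mathlib

/-!
Frankl's random walk method. Shifting (the UV-compressions replacing `j` by some `i < j`) keeps a
family `r`-wise `t`-intersecting, so `𝓕` may be assumed shifted. Read a set `S ⊆ [n]` as a lattice
walk with an up-step at each element of `S` and a right-step elsewhere. Every member of a shifted
`𝓕` reaches the line `y = (r - 1) x + t`: otherwise, moving its elements down into its gaps in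
`r - 1` different ways would produce `r` members meeting in fewer than `t` elements. An up-step
brings the walk one unit closer to the line and a right-step takes it `r - 1` units away, so as
`α ^ t = (α ^ (t - 1) + α ^ (t + r - 1)) / 2`, at most a proportion `α ^ t` of all subsets of `[n]`
reach the line. Grouping the walks by their part up to the first hitting time, the proportion
among `k`-subsets is no larger when `2k ≤ n`, by a binomial estimate.
-/

/-- A family `𝓕` is `r`-wise `t`-intersecting if any `r` (not necessarily distinct)
members have at least `t` common elements. -/
def RwiseIntersecting (r t : ℕ) (𝓕 : Finset (Finset ℕ)) : Prop :=
  ∀ G : Fin r → Finset ℕ, (∀ i, G i ∈ 𝓕) → t ≤ (⋂ i, ((G i : Finset ℕ) : Set ℕ)).ncard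

open Finset UV
open scoped FinsetFamily

/-! ### Binomial estimates -/

theorem two_mul_choose_sub_one_le_choose {n k : ℕ} (hn : 2 * k ≤ n) (hk : 1 ≤ k) :
    2 * (n - 1).choose (k - 1) ≤ n.choose k := by
  obtain ⟨j, rfl⟩ : ∃ j, k = j + 1 := ⟨k - 1, by omega⟩
  obtain ⟨m, rfl⟩ : ∃ m, n = m + 1 := ⟨n - 1, by omega⟩
  simp only [Nat.add_sub_cancel]
  refine Nat.le_of_mul_le_mul_right ?_ (Nat.succ_pos j)
  calc 2 * m.choose j * (j + 1) = 2 * (j + 1) * m.choose j := by ring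
    _ ≤ (m + 1) * m.choose j := Nat.mul_le_mul_right _ (by omega)
    _ = (m + 1).choose (j + 1) * (j + 1) := Nat.add_one_mul_choose_eq m j

theorem eight_mul_choose_sub_le_choose {n k : ℕ} (hn : 2 * k < n) (hk : 2 ≤ k) :
    8 * (n - 3).choose (k - 2) ≤ n.choose k := by
  obtain ⟨j, rfl⟩ : ∃ j, k = j + 2 := ⟨k - 2, by omega⟩
  obtain ⟨e, rfl⟩ : ∃ e, n = 2 * j + 5 + e := ⟨n - (2 * j + 5), by omega⟩
  set m := 2 * j + 2 + e with hm
  have h1 : (m + 3) * (m + 2).choose (j + 1) = (m + 3).choose (j + 2) * (j + 2) :=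
    Nat.add_one_mul_choose_eq (m + 2) (j + 1)
  have h2 : (m + 2) * (m + 1).choose j = (m + 2).choose (j + 1) * (j + 1) :=
    Nat.add_one_mul_choose_eq (m + 1) j
  have h3 : m.choose j * (m + 1) = (m + 1).choose j * (j + 3 + e) := by
    rw [Nat.choose_mul_succ_eq, show m + 1 - j = j + 3 + e by omega]
  rw [show 2 * j + 5 + e = m + 3 by omega, show j + 2 - 2 = j by omega, Nat.add_sub_cancel]
  refine Nat.le_of_mul_le_mul_right (c := (j + 2) * (j + 1) * (j + 3 + e)) ?_ (by positivity)
  calc 8 * m.choose j * ((j + 2) * (j + 1) * (j + 3 + e))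
      = (8 * ((j + 2) * (j + 1) * (j + 3 + e))) * m.choose j := by ring
    _ ≤ (m + 3) * (m + 2) * (m + 1) * m.choose j := by
      refine Nat.mul_le_mul_right _ ?_
      rw [hm]
      nlinarith [Nat.zero_le (j * e), Nat.zero_le (e * e)]
    _ = (m + 3) * ((m + 2) * (m + 1).choose j * (j + 3 + e)) := by
      rw [mul_assoc _ (m + 1), mul_comm (m + 1), h3]
      ring
    _ = (m + 3) * (m + 2).choose (j + 1) * (j + 1) * (j + 3 + e) := by
      rw [h2]
      ring
    _ = (m + 3).choose (j + 2) * ((j + 2) * (j + 1) * (j + 3 + e)) := by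
      rw [h1]
      ring

theorem two_pow_mul_choose_sub_le_choose {n k e : ℕ} (hn : 2 * k ≤ n) (he : e ≤ k) :
    2 ^ e * (n - e).choose (k - e) ≤ n.choose k := by
  induction e generalizing n k with
  | zero => simp
  | succ e ih =>
    calc 2 ^ (e + 1) * (n - (e + 1)).choose (k - (e + 1))
        = 2 * (2 ^ e * (n - 1 - e).choose (k - 1 - e)) := by
          rw [show n - (e + 1) = n - 1 - e by omega, show k - (e + 1) = k - 1 - e by omega]
          ring
      _ ≤ 2 * (n - 1).choose (k - 1) := Nat.mul_le_mul_left _ (ih (by omega) (by omega))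
      _ ≤ n.choose k := two_mul_choose_sub_one_le_choose hn (by omega)

theorem eight_pow_mul_choose_sub_le_choose {n k d : ℕ} (hn : 2 * k < n) (hd : 2 * d ≤ k) :
    8 ^ d * (n - 3 * d).choose (k - 2 * d) ≤ n.choose k := by
  induction d generalizing n k with
  | zero => simp
  | succ d ih =>
    calc 8 ^ (d + 1) * (n - 3 * (d + 1)).choose (k - 2 * (d + 1))
        = 8 * (8 ^ d * (n - 3 - 3 * d).choose (k - 2 - 2 * d)) := by
          rw [show n - 3 * (d + 1) = n - 3 - 3 * d by omega,
            show k - 2 * (d + 1) = k - 2 - 2 * d by omega]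
          ring
      _ ≤ 8 * (n - 3).choose (k - 2) := Nat.mul_le_mul_left _ (ih (by omega) (by omega))
      _ ≤ n.choose k := eight_mul_choose_sub_le_choose hn (by omega)

/-- Write `u + d = 1 + 3d + e`: one step `(n, k) ↦ (n - 1, k - 1)` turns `2k ≤ n` into the
strict inequality that the `d` steps `(n, k) ↦ (n - 3, k - 2)` need; `e` more steps
`(n, k) ↦ (n - 1, k - 1)` follow. -/
theorem two_pow_mul_choose_le_choose {n k u d : ℕ} (hn : 2 * k ≤ n) (hu : u ≤ k)
    (hd : 2 * d < u) : 2 ^ (u + d) * (n - (u + d)).choose (k - u) ≤ n.choose k := by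
  obtain ⟨e, rfl⟩ : ∃ e, u = 1 + 2 * d + e := ⟨u - (1 + 2 * d), by omega⟩
  calc 2 ^ (1 + 2 * d + e + d) * (n - (1 + 2 * d + e + d)).choose (k - (1 + 2 * d + e))
      = 2 * (8 ^ d * (2 ^ e * (n - 1 - 3 * d - e).choose (k - 1 - 2 * d - e))) := by
        rw [show n - (1 + 2 * d + e + d) = n - 1 - 3 * d - e by omega,
          show k - (1 + 2 * d + e) = k - 1 - 2 * d - e by omega,
          show (8 : ℕ) = 2 ^ 3 by norm_num, ← pow_mul]
        ring
    _ ≤ 2 * (8 ^ d * (n - 1 - 3 * d).choose (k - 1 - 2 * d)) := by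
        gcongr
        exact two_pow_mul_choose_sub_le_choose (by omega) (by omega)
    _ ≤ 2 * (n - 1).choose (k - 1) := by
        gcongr
        exact eight_pow_mul_choose_sub_le_choose (by omega) (by omega)
    _ ≤ n.choose k := two_mul_choose_sub_one_le_choose hn (by omega)

/-! ### Shifting -/

section Compression

variable {α : Type*} [DecidableEq α] {i j x : α} {A : Finset α}

lemma compress_singleton_of_notMem_of_mem (hi : i ∉ A) (hj : j ∈ A) :
    compress {i} {j} A = insert i (A.erase j) := by
  rw [compress_of_disjoint_of_le (disjoint_singleton_left.2 hi) (singleton_subset_iff.2 hj)]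
  ext x
  simp only [sup_eq_union, mem_sdiff, mem_union, mem_singleton, mem_insert, mem_erase]
  grind

lemma compress_singleton_subset_insert : compress {i} {j} A ⊆ insert i A := by
  unfold compress
  split_ifs
  · intro x hx
    simp only [sup_eq_union, mem_sdiff, mem_union, mem_singleton, mem_insert] at hx ⊢
    tauto
  · exact subset_insert i A

lemma swap_mem_of_mem_compress (hx : x ∈ compress {i} {j} A) (hxi : x ≠ i) :
    Equiv.swap i j x ∈ A := by
  unfold compress at hx
  split_ifs at hx with h
  · simp only [sup_eq_union, mem_sdiff, mem_union, mem_singleton] at hx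
    rw [Equiv.swap_apply_of_ne_of_ne hxi hx.2]
    exact hx.1.resolve_right hxi
  · rw [disjoint_singleton_left, singleton_subset_iff] at h
    by_cases hxj : x = j
    · subst hxj
      rw [Equiv.swap_apply_right]
      tauto
    · rwa [Equiv.swap_apply_of_ne_of_ne hxi hxj]

lemma swap_mem_of_mem_union_sdiff (hi : i ∈ A) (hx : x ∈ (A ∪ {j}) \ {i}) :
    Equiv.swap i j x ∈ A := by
  simp only [mem_sdiff, mem_union, mem_singleton] at hx
  by_cases hxj : x = j
  · rwa [hxj, Equiv.swap_apply_right]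
  · rw [Equiv.swap_apply_of_ne_of_ne hx.2 hxj]
    exact hx.1.resolve_right hxj

end Compression

theorem RwiseIntersecting.compression {r t i j : ℕ} {𝓕 : Finset (Finset ℕ)}
    (h : RwiseIntersecting r t 𝓕) : RwiseIntersecting r t (𝓒 {i} {j} 𝓕) := by
  intro G hG
  by_cases hall : ∀ s, G s ∈ 𝓕
  · exact h G hall
  obtain ⟨s₀, hs₀⟩ := not_forall.1 hall
  -- Pull each `G s` back into `𝓕`; the swap `i ↔ j` then injects the new intersection
  -- into the old one.
  let G' : Fin r → Finset ℕ := fun s ↦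
    if G s ∈ 𝓕 then compress {i} {j} (G s) else (G s ∪ {j}) \ {i}
  have hG' : ∀ s, G' s ∈ 𝓕 := by
    intro s
    by_cases hs : G s ∈ 𝓕
    · simpa only [G', if_pos hs] using
        ((mem_compression.1 (hG s)).resolve_right fun h' ↦ h'.1 hs).2
    · simpa only [G', if_neg hs, sup_eq_union] using
        sup_sdiff_mem_of_mem_compression_of_notMem (hG s) hs
  have hswap : ∀ s, ∀ x ∈ G' s, x ≠ i → Equiv.swap i j x ∈ G s := by
    intro s x hx hxi
    by_cases hs : G s ∈ 𝓕
    · simp only [G', if_pos hs] at hx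
      exact swap_mem_of_mem_compress hx hxi
    · simp only [G', if_neg hs] at hx
      exact swap_mem_of_mem_union_sdiff
        (singleton_subset_iff.1 (le_of_mem_compression_of_notMem (hG s) hs)) hx
  have hi : i ∉ G' s₀ := by simp [G', hs₀]
  refine (h G' hG').trans <| Set.ncard_le_ncard_of_injOn (Equiv.swap i j) ?_
    (Equiv.injective _).injOn ((G s₀).finite_toSet.subset (Set.iInter_subset _ s₀))
  intro x hx
  simp only [Set.mem_iInter, mem_coe] at hx ⊢
  exact fun s ↦ hswap s x (hx s) fun hxi ↦ hi (hxi ▸ hx s₀)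

lemma compression_subset_powersetCard {k i j : ℕ} {s : Finset ℕ} {𝓕 : Finset (Finset ℕ)}
    (h𝓕 : 𝓕 ⊆ powersetCard k s) (hi : i ∈ s) : 𝓒 {i} {j} 𝓕 ⊆ powersetCard k s := by
  intro A hA
  obtain ⟨hA, -⟩ | ⟨-, B, hB, rfl⟩ := mem_compression.1 hA
  · exact h𝓕 hA
  obtain ⟨hBs, hBk⟩ := mem_powersetCard.1 (h𝓕 hB)
  exact mem_powersetCard.2 ⟨compress_singleton_subset_insert.trans (insert_subset hi hBs),
    (card_compress (by simp) B).trans hBk⟩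

def weight (𝓕 : Finset (Finset ℕ)) : ℕ := ∑ A ∈ 𝓕, ∑ x ∈ A, x

lemma sum_compress_lt {i j : ℕ} {A : Finset ℕ} (hij : i < j) (h : compress {i} {j} A ≠ A) :
    ∑ x ∈ compress {i} {j} A, x < ∑ x ∈ A, x := by
  obtain ⟨hi, hj⟩ : i ∉ A ∧ j ∈ A := by
    unfold compress at h
    rw [Ne, ite_eq_right_iff, Classical.not_imp, disjoint_singleton_left, singleton_subset_iff] at h
    exact h.1
  rw [compress_singleton_of_notMem_of_mem hi hj,
    sum_insert fun h' ↦ hi (mem_of_mem_erase h'), ← sum_erase_add A _ hj]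
  omega

lemma weight_compression_lt {i j : ℕ} {𝓕 : Finset (Finset ℕ)} {F : Finset ℕ} (hij : i < j)
    (hF : F ∈ 𝓕) (hF' : compress {i} {j} F ∉ 𝓕) : weight (𝓒 {i} {j} 𝓕) < weight 𝓕 := by
  rw [weight, weight, compression, sum_union compress_disjoint, filter_image,
    sum_image compress_injOn]
  conv_rhs => rw [← filter_union_filter_not_eq (fun A ↦ compress {i} {j} A ∈ 𝓕) 𝓕]
  rw [sum_union (disjoint_filter_filter_not _ _ _), add_lt_add_iff_left]
  refine sum_lt_sum_of_nonempty ⟨F, mem_filter.2 ⟨hF, hF'⟩⟩ fun A hA ↦ sum_compress_lt hij ?_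
  obtain ⟨hA, hA'⟩ := mem_filter.1 hA
  exact fun h ↦ hA' (by rwa [h])

def Shifted (𝓕 : Finset (Finset ℕ)) : Prop :=
  ∀ ⦃i j : ℕ⦄, 1 ≤ i → i < j → ∀ A ∈ 𝓕, compress {i} {j} A ∈ 𝓕

theorem exists_shifted {r t n k : ℕ} {𝓕 : Finset (Finset ℕ)}
    (h𝓕 : 𝓕 ⊆ powersetCard k (Icc 1 n)) (hint : RwiseIntersecting r t 𝓕) :
    ∃ 𝓖 ⊆ powersetCard k (Icc 1 n), RwiseIntersecting r t 𝓖 ∧ #𝓖 = #𝓕 ∧ Shifted 𝓖 := by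
  classical
  obtain ⟨𝓖, h𝓖, hmin⟩ := exists_min_image
    {𝓖 ∈ (powersetCard k (Icc 1 n)).powerset | RwiseIntersecting r t 𝓖 ∧ #𝓖 = #𝓕} weight
    ⟨𝓕, mem_filter.2 ⟨mem_powerset.2 h𝓕, hint, rfl⟩⟩
  obtain ⟨hsub, hint𝓖, hcard⟩ := mem_filter.1 h𝓖
  rw [mem_powerset] at hsub
  refine ⟨𝓖, hsub, hint𝓖, hcard, fun i j hi hij A hA ↦ ?_⟩
  by_contra hA'
  have hj : j ∈ A := by
    by_contra hj
    rw [compress, if_neg fun h ↦ hj (singleton_subset_iff.1 h.2)] at hA'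
    exact hA' hA
  have hjn : j ≤ n := (mem_Icc.1 ((mem_powersetCard.1 (hsub hA)).1 hj)).2
  have hcomp := hmin (𝓒 {i} {j} 𝓖) <| mem_filter.2
    ⟨mem_powerset.2 (compression_subset_powersetCard hsub (mem_Icc.2 ⟨hi, by omega⟩)),
      hint𝓖.compression, (card_compression _ _ _).trans hcard⟩
  exact (weight_compression_lt hij hA hA').not_ge hcomp

theorem Shifted.sdiff_union_image_mem {𝓕 : Finset (Finset ℕ)} (h𝓕 : Shifted 𝓕) {ψ : ℕ → ℕ}
    {A F : Finset ℕ} (hF : F ∈ 𝓕) (hAF : A ⊆ F) (hψ : ∀ x ∈ A, 1 ≤ ψ x ∧ ψ x < x ∧ ψ x ∉ F)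
    (hinj : Set.InjOn ψ A) : F \ A ∪ A.image ψ ∈ 𝓕 := by
  induction A using Finset.induction_on generalizing F with
  | empty => simpa using hF
  | @insert a A ha ih =>
    have haF : a ∈ F := hAF (mem_insert_self a A)
    obtain ⟨hψa₁, hψa, hψaF⟩ := hψ a (mem_insert_self a A)
    have hF₁ : insert (ψ a) (F.erase a) ∈ 𝓕 := by
      rw [← compress_singleton_of_notMem_of_mem hψaF haF]
      exact h𝓕 hψa₁ hψa F hF
    have hψA : ∀ x ∈ A, ψ x ≠ ψ a := fun x hx h ↦
      ha (hinj (mem_insert_of_mem hx) (mem_insert_self a A) h ▸ hx)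
    have key := ih hF₁ (fun x hx ↦ mem_insert_of_mem (mem_erase.2
        ⟨fun h ↦ ha (h ▸ hx), hAF (mem_insert_of_mem hx)⟩))
      (fun x hx ↦ by
        obtain ⟨h₁, h₂, h₃⟩ := hψ x (mem_insert_of_mem hx)
        simp only [mem_insert, mem_erase, not_or, not_and]
        exact ⟨h₁, h₂, hψA x hx, fun _ ↦ h₃⟩)
      (hinj.mono (coe_subset.2 (subset_insert a A)))
    convert key using 1
    ext x
    have hψaA : ψ a ∉ A := fun h ↦ hψaF (hAF (mem_insert_of_mem h))
    simp only [mem_union, mem_sdiff, mem_insert, mem_erase, mem_image]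
    grind

/-! ### Members of a shifted family reach the line -/

/-- The walk of `S` after position `a`, with an up-step at each element of `S` and a right-step at
every other integer, reaches the line `y = (r - 1) x + t` within `N` steps. -/
def HitsLine (r t a N : ℕ) (S : Finset ℕ) : Prop :=
  ∃ m ≤ N, (r - 1) * m + t ≤ r * #(S ∩ Icc (a + 1) (a + m))

instance (r t a N : ℕ) : DecidablePred (HitsLine r t a N) := fun _ ↦ by
  unfold HitsLine
  infer_instance

lemma Nat.count_add_count_not (p : ℕ → Prop) [DecidablePred p] (n : ℕ) :
    Nat.count p n + Nat.count (fun x ↦ ¬p x) n = n := by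
  simp only [Nat.count_eq_card_filter_range]
  rw [card_filter_add_card_filter_not, card_range]

lemma card_inter_Icc_one_eq_count_add_one {F : Finset ℕ} {x : ℕ} (h0 : 0 ∉ F) (hx : x ∈ F) :
    #(F ∩ Icc 1 x) = Nat.count (· ∈ F) x + 1 := by
  have h := Nat.count_succ (· ∈ F) x
  rw [if_pos hx, Nat.count_eq_card_filter_range] at h
  rw [← h]
  congr 1
  ext y
  simp only [mem_inter, mem_Icc, mem_filter, mem_range]
  constructor
  · rintro ⟨hy, hy1, hyx⟩
    exact ⟨by omega, hy⟩
  · rintro ⟨hyx, hy⟩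
    exact ⟨hy, Nat.one_le_iff_ne_zero.2 fun h ↦ h0 (h ▸ hy), by omega⟩

lemma card_filter_count_lt_le (F : Finset ℕ) (m : ℕ) : #{x ∈ F | Nat.count (· ∈ F) x < m} ≤ m := by
  simpa using card_le_card_of_injOn (Nat.count (· ∈ F)) (t := range m)
    (fun x hx ↦ mem_range.2 (mem_filter.1 (mem_coe.1 hx)).2)
    (fun x hx y hy h ↦ Nat.count_injective (mem_filter.1 hx).1 (mem_filter.1 hy).1 h)

section Gaps

variable {F : Finset ℕ} {r t x : ℕ}

def rankClass (F : Finset ℕ) (r t c : ℕ) : Finset ℕ :=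
  {x ∈ F | t ≤ Nat.count (· ∈ F) x + 1 ∧ (Nat.count (· ∈ F) x + 1 - t) % r = c}

/-- The `+ 1` skips the smallest non-member of `F`, which is `0` when `F ⊆ [n]`. -/
noncomputable def gapFor (F : Finset ℕ) (r t x : ℕ) : ℕ :=
  Nat.nth (· ∉ F) ((Nat.count (· ∈ F) x + 1 - t) / r + 1)

lemma infinite_setOf_notMem (F : Finset ℕ) : (Set.ofPred (· ∉ F)).Infinite :=
  F.finite_toSet.infinite_compl

lemma gapFor_notMem : gapFor F r t x ∉ F :=
  Nat.nth_mem_of_infinite (infinite_setOf_notMem F) _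

lemma one_le_gapFor : 1 ≤ gapFor F r t x :=
  (Nat.nth_strictMono (infinite_setOf_notMem F) (Nat.succ_pos _)).trans_le' (Nat.zero_le _)

lemma gapFor_lt (hx : (r + 1) * (Nat.count (· ∈ F) x + 1) < r * x + t)
    (htx : t ≤ Nat.count (· ∈ F) x + 1) : gapFor F r t x < x := by
  refine Nat.nth_lt_of_lt_count ?_
  have hcount := Nat.count_add_count_not (· ∈ F) x
  set ρ := Nat.count (· ∈ F) x
  have hq : ρ + 1 - t < r * (x - (ρ + 1)) := by
    rw [Nat.mul_sub, add_one_mul] at *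
    omega
  have := Nat.div_lt_of_lt_mul hq
  generalize (ρ + 1 - t) / r = j at this ⊢
  omega

lemma gapFor_injOn (c : ℕ) : Set.InjOn (gapFor F r t) (rankClass F r t c) := by
  intro x hx y hy hxy
  obtain ⟨hxF, htx, hcx⟩ := mem_filter.1 (mem_coe.1 hx)
  obtain ⟨hyF, hty, hcy⟩ := mem_filter.1 (mem_coe.1 hy)
  have hlevel := Nat.add_right_cancel (Nat.nth_injective (infinite_setOf_notMem F) hxy)
  have hx' := Nat.div_add_mod (Nat.count (· ∈ F) x + 1 - t) r
  have hy' := Nat.div_add_mod (Nat.count (· ∈ F) y + 1 - t) r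
  rw [hlevel, hcx, ← hcy] at hx'
  exact Nat.count_injective (p := (· ∈ F)) hxF hyF (by omega)

end Gaps

/-- If the walk of `F` stayed below the line, then moving the members of each `rankClass` down to
their `gapFor` would give `r - 1` members of `𝓕` whose intersection with `F` contains only the
`t - 1` smallest members of `F`. -/
theorem Shifted.hitsLine {r t n : ℕ} {𝓕 : Finset (Finset ℕ)} (h𝓕 : Shifted 𝓕) (hr : 2 ≤ r)
    (ht : 1 ≤ t) (hint : RwiseIntersecting r t 𝓕) {F : Finset ℕ} (hF : F ∈ 𝓕)
    (hFn : F ⊆ Icc 1 n) : HitsLine r t 0 n F := by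
  obtain ⟨r, rfl⟩ : ∃ r', r = r' + 1 := ⟨r - 1, by omega⟩
  by_contra hmiss
  have h0 : 0 ∉ F := fun h ↦ by simpa using hFn h
  have hmove : ∀ c, ∀ x ∈ rankClass F r t c,
      1 ≤ gapFor F r t x ∧ gapFor F r t x < x ∧ gapFor F r t x ∉ F := by
    intro c x hx
    obtain ⟨hxF, htx, -⟩ := mem_filter.1 hx
    have hbelow := not_exists.1 hmiss x
    rw [zero_add, zero_add, card_inter_Icc_one_eq_count_add_one h0 hxF, Nat.add_sub_cancel]
      at hbelow
    exact ⟨one_le_gapFor, gapFor_lt (by have := (mem_Icc.1 (hFn hxF)).2; omega) htx,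
      gapFor_notMem⟩
  let G : Fin (r + 1) → Finset ℕ :=
    Fin.cons F fun c ↦ F \ rankClass F r t c ∪ (rankClass F r t c).image (gapFor F r t)
  have hG : ∀ s, G s ∈ 𝓕 := Fin.cases hF fun c ↦
    h𝓕.sdiff_union_image_mem hF (filter_subset _ _) (hmove c) (gapFor_injOn c)
  have hsub : ⋂ s, (G s : Set ℕ) ⊆ ↑{x ∈ F | Nat.count (· ∈ F) x < t - 1} := by
    intro x hx
    simp only [Set.mem_iInter, mem_coe] at hx
    have hxF : x ∈ F := hx 0
    refine mem_filter.2 ⟨hxF, not_le.1 fun htx ↦ ?_⟩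
    have hxc : x ∈ rankClass F r t ((Nat.count (· ∈ F) x + 1 - t) % r) :=
      mem_filter.2 ⟨hxF, by omega, rfl⟩
    have := hx (Fin.succ ⟨(Nat.count (· ∈ F) x + 1 - t) % r, Nat.mod_lt _ (by omega)⟩)
    simp only [G, Fin.cons_succ, mem_union, mem_sdiff, mem_image] at this
    obtain ⟨-, hx'⟩ | ⟨y, -, rfl⟩ := this
    · exact hx' hxc
    · exact gapFor_notMem hxF
  have := (hint G hG).trans (Set.ncard_le_ncard hsub)
  rw [Set.ncard_coe_finset] at this
  have := card_filter_count_lt_le F (t - 1)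
  omega

/-! ### Counting the walks that reach the line -/

lemma card_filter_powerset_insert {α : Type*} [DecidableEq α] {s : Finset α} {a : α}
    (ha : a ∉ s) (p : Finset α → Prop) [DecidablePred p] :
    #{T ∈ (insert a s).powerset | p T} =
      #{T ∈ s.powerset | p T} + #{T ∈ s.powerset | p (insert a T)} := by
  simp only [card_filter]
  exact sum_powerset_insert ha _

section HitsLine

variable {r t a N : ℕ} {S : Finset ℕ}

lemma hitsLine_threshold_zero : HitsLine r 0 a N S := ⟨0, Nat.zero_le N, by simp⟩

lemma HitsLine.threshold_eq_zero (h : HitsLine r t a 0 S) : t = 0 := by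
  obtain ⟨m, hm, h⟩ := h
  obtain rfl : m = 0 := by omega
  simpa using h

lemma hitsLine_succ_iff (ht : 1 ≤ t) :
    HitsLine r t a (N + 1) S ↔
      ∃ m ≤ N, (r - 1) * m + (r - 1) + t ≤ r * #(S ∩ Icc (a + 1) (a + 1 + m)) := by
  constructor
  · rintro ⟨_ | m, hm, h⟩
    · simp at h
      omega
    · refine ⟨m, by omega, ?_⟩
      rwa [mul_add_one, ← add_assoc, Nat.add_right_comm a m 1] at h
  · rintro ⟨m, hm, h⟩
    exact ⟨m + 1, by omega, by rwa [mul_add_one, ← add_assoc, Nat.add_right_comm a m 1]⟩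

lemma inter_Icc_succ_of_notMem (ha : a + 1 ∉ S) (m : ℕ) :
    S ∩ Icc (a + 1) (a + 1 + m) = S ∩ Icc (a + 1 + 1) (a + 1 + m) := by
  rw [← insert_Icc_add_one_left_eq_Icc (by omega), inter_insert_of_notMem ha]

lemma hitsLine_succ_iff_of_notMem (ht : 1 ≤ t) (ha : a + 1 ∉ S) :
    HitsLine r t a (N + 1) S ↔ HitsLine r (t + (r - 1)) (a + 1) N S := by
  rw [hitsLine_succ_iff ht, HitsLine]
  simp only [inter_Icc_succ_of_notMem ha]
  simp only [add_assoc, add_comm (r - 1) t]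

lemma hitsLine_succ_insert_iff (hr : 1 ≤ r) (ht : 1 ≤ t) (ha : a + 1 ∉ S) :
    HitsLine r t a (N + 1) (insert (a + 1) S) ↔ HitsLine r (t - 1) (a + 1) N S := by
  have hcard (m : ℕ) : #(insert (a + 1) S ∩ Icc (a + 1) (a + 1 + m)) =
      #(S ∩ Icc (a + 1 + 1) (a + 1 + m)) + 1 := by
    rw [← insert_Icc_add_one_left_eq_Icc (by omega), ← insert_inter_distrib,
      card_insert_of_notMem fun h ↦ ha (mem_inter.1 h).1]
  rw [hitsLine_succ_iff ht, HitsLine]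
  simp only [hcard, mul_add_one]
  refine exists_congr fun m ↦ and_congr_right fun _ ↦ ?_
  omega

theorem card_filter_hitsLine_powerset_le {α : ℝ} (hr : 1 ≤ r) (hα : 0 ≤ α)
    (hαr : 1 + α ^ r = 2 * α) (N a t : ℕ) :
    (#{S ∈ (Icc (a + 1) (a + N)).powerset | HitsLine r t a N S} : ℝ) ≤ α ^ t * 2 ^ N := by
  induction N generalizing a t with
  | zero =>
    rcases Nat.eq_zero_or_pos t with rfl | ht
    · simp [hitsLine_threshold_zero]
    · rw [filter_false_of_mem fun S _ h ↦ ht.ne' h.threshold_eq_zero]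
      simp only [card_empty, Nat.cast_zero]
      positivity
  | succ N ih =>
    rcases Nat.eq_zero_or_pos t with rfl | ht
    · calc _ ≤ (#(Icc (a + 1) (a + (N + 1))).powerset : ℝ) := by
            exact_mod_cast card_filter_le _ _
        _ = α ^ 0 * 2 ^ (N + 1) := by simp
    have hnot : a + 1 ∉ Icc (a + 1 + 1) (a + 1 + N) := by simp
    have hnotMem : ∀ T ∈ (Icc (a + 1 + 1) (a + 1 + N)).powerset, a + 1 ∉ T :=
      fun T hT h ↦ hnot (mem_powerset.1 hT h)
    rw [← add_assoc, Nat.add_right_comm, ← insert_Icc_add_one_left_eq_Icc (by omega),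
      card_filter_powerset_insert hnot,
      filter_congr fun T hT ↦ hitsLine_succ_iff_of_notMem ht (hnotMem T hT),
      filter_congr fun T hT ↦ hitsLine_succ_insert_iff hr ht (hnotMem T hT)]
    push_cast
    calc _ ≤ α ^ (t + (r - 1)) * 2 ^ N + α ^ (t - 1) * 2 ^ N := add_le_add (ih _ _) (ih _ _)
      _ = α ^ (t - 1) * (1 + α ^ r) * 2 ^ N := by
        rw [show t + (r - 1) = t - 1 + r by omega, pow_add]
        ring
      _ = α ^ (t - 1 + 1) * 2 ^ (N + 1) := by
        rw [hαr]
        ring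
      _ = α ^ t * 2 ^ (N + 1) := by rw [Nat.sub_add_cancel ht]

end HitsLine

section HitTime

variable {r t N : ℕ} {S S' : Finset ℕ}

noncomputable def hitTime (r t : ℕ) (S : Finset ℕ) : ℕ :=
  sInf {m | (r - 1) * m + t ≤ r * #(S ∩ Icc 1 m)}

lemma hitsLine_zero_iff : HitsLine r t 0 N S ↔ ∃ m ≤ N, (r - 1) * m + t ≤ r * #(S ∩ Icc 1 m) := by
  simp only [HitsLine, zero_add]

lemma HitsLine.hitTime_le (h : HitsLine r t 0 N S) : hitTime r t S ≤ N := by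
  obtain ⟨m, hm, hS⟩ := hitsLine_zero_iff.1 h
  exact (Nat.sInf_le (s := {m | (r - 1) * m + t ≤ r * #(S ∩ Icc 1 m)}) hS).trans hm

lemma HitsLine.sub_one_mul_hitTime_add_le (h : HitsLine r t 0 N S) :
    (r - 1) * hitTime r t S + t ≤ r * #(S ∩ Icc 1 (hitTime r t S)) := by
  obtain ⟨m, -, hS⟩ := hitsLine_zero_iff.1 h
  exact Nat.sInf_mem (s := {m | (r - 1) * m + t ≤ r * #(S ∩ Icc 1 m)}) ⟨m, hS⟩

lemma inter_Icc_eq_of_inter_Icc_eq {M m : ℕ} (hS : S' ∩ Icc 1 M = S ∩ Icc 1 M) (hm : m ≤ M) :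
    S' ∩ Icc 1 m = S ∩ Icc 1 m := by
  have hIcc : Icc 1 m = Icc 1 M ∩ Icc 1 m := (inter_eq_right.2 (Icc_subset_Icc_right hm)).symm
  rw [hIcc, ← inter_assoc, ← inter_assoc, hS]

lemma HitsLine.of_inter_Icc_hitTime_eq (h : HitsLine r t 0 N S)
    (hS : S' ∩ Icc 1 (hitTime r t S) = S ∩ Icc 1 (hitTime r t S)) :
    HitsLine r t 0 N S' ∧ hitTime r t S' = hitTime r t S := by
  have hM := h.sub_one_mul_hitTime_add_le
  rw [← hS] at hM
  have h' : HitsLine r t 0 N S' := hitsLine_zero_iff.2 ⟨_, h.hitTime_le, hM⟩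
  refine ⟨h', (Nat.sInf_le (s := {m | (r - 1) * m + t ≤ r * #(S' ∩ Icc 1 m)}) hM).antisymm
    (not_lt.1 fun hlt ↦ ?_)⟩
  change hitTime r t S' < hitTime r t S at hlt
  have hS' := h'.sub_one_mul_hitTime_add_le
  rw [inter_Icc_eq_of_inter_Icc_eq hS hlt.le] at hS'
  exact Nat.notMem_of_lt_sInf hlt hS'

end HitTime

lemma card_filter_inter_Icc_eq_le (n k M : ℕ) (P : Finset ℕ) :
    #{S ∈ powersetCard k (Icc 1 n) | S ∩ Icc 1 M = P} ≤ (n - M).choose (k - #P) := by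
  calc _ ≤ #(powersetCard (k - #P) (Icc (M + 1) n)) := by
        refine card_le_card_of_injOn (· \ P) (fun S hS ↦ ?_) (fun S hS S' hS' hSS' ↦ ?_)
        · obtain ⟨hSmem, rfl⟩ := mem_filter.1 (mem_coe.1 hS)
          obtain ⟨hSn, hSk⟩ := mem_powersetCard.1 hSmem
          refine mem_powersetCard.2 ⟨fun x hx ↦ ?_, ?_⟩
          · simp only [mem_sdiff, mem_inter, mem_Icc, not_and] at hx
            have := mem_Icc.1 (hSn hx.1)
            exact mem_Icc.2 ⟨by have := hx.2 hx.1 this.1; omega, this.2⟩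
          · rw [card_sdiff_of_subset inter_subset_left, hSk]
        · obtain ⟨-, rfl⟩ := mem_filter.1 (mem_coe.1 hS)
          obtain ⟨-, hP⟩ := mem_filter.1 (mem_coe.1 hS')
          have hSS' : S \ (S ∩ Icc 1 M) = S' \ (S ∩ Icc 1 M) := hSS'
          rw [← union_sdiff_of_subset (inter_subset_left : S ∩ Icc 1 M ⊆ S),
            ← union_sdiff_of_subset (hP ▸ inter_subset_left : S ∩ Icc 1 M ⊆ S'), hSS']
    _ = (n - M).choose (k - #P) := by rw [card_powersetCard, Nat.card_Icc, Nat.add_sub_add_right]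

theorem card_mul_le_card_mul_of_forall_fiber {ι κ : Type*} [DecidableEq κ] {s t : Finset ι}
    (f : ι → κ) (hst : s ⊆ t) {a b : ℕ}
    (h : ∀ y ∈ s.image f, #{x ∈ s | f x = y} * a ≤ #{x ∈ t | f x = y} * b) :
    #s * a ≤ #t * b :=
  calc #s * a = ∑ y ∈ s.image f, #{x ∈ s | f x = y} * a := by
        rw [card_eq_sum_card_image f s, sum_mul]
    _ ≤ ∑ y ∈ s.image f, #{x ∈ t | f x = y} * b := sum_le_sum h
    _ ≤ ∑ y ∈ t.image f, #{x ∈ t | f x = y} * b :=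
        sum_le_sum_of_subset (image_subset_image hst)
    _ = #t * b := by rw [← sum_mul, ← card_eq_sum_card_image]

noncomputable def hitPrefix (r t : ℕ) (S : Finset ℕ) : ℕ × Finset ℕ :=
  (hitTime r t S, S ∩ Icc 1 (hitTime r t S))

lemma union_inter_Icc_eq {P T : Finset ℕ} {M n : ℕ} (hP : P ⊆ Icc 1 M) (hT : T ⊆ Icc (M + 1) n) :
    (P ∪ T) ∩ Icc 1 M = P := by
  rw [union_inter_distrib_right, inter_eq_left.2 hP, union_eq_left]
  intro x hx
  have h₁ := mem_Icc.1 (hT (mem_inter.1 hx).1)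
  have h₂ := mem_Icc.1 (mem_inter.1 hx).2
  omega

lemma two_pow_le_card_filter_hitPrefix_eq {r t n : ℕ} {S₀ : Finset ℕ}
    (hS₀ : HitsLine r t 0 n S₀) :
    2 ^ (n - hitTime r t S₀) ≤
      #{S ∈ {S ∈ (Icc 1 n).powerset | HitsLine r t 0 n S} |
        hitPrefix r t S = hitPrefix r t S₀} := by
  set M := hitTime r t S₀
  set P := S₀ ∩ Icc 1 M
  have hP : P ⊆ Icc 1 M := inter_subset_right
  have hMn : M ≤ n := hS₀.hitTime_le
  have hdisj : ∀ T ∈ (Icc (M + 1) n).powerset, Disjoint P T := fun T hT ↦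
    disjoint_left.2 fun x hxP hxT ↦ by
      have := mem_Icc.1 (hP hxP)
      have := mem_Icc.1 (mem_powerset.1 hT hxT)
      omega
  calc 2 ^ (n - M) = #((Icc (M + 1) n).powerset.image (P ∪ ·)) := by
        rw [card_image_of_injOn, card_powerset, Nat.card_Icc, Nat.add_sub_add_right]
        intro T hT T' hT' h
        rw [← union_sdiff_cancel_left (hdisj T hT), ← union_sdiff_cancel_left (hdisj T' hT')]
        exact congrArg (· \ P) h
    _ ≤ _ := by
        refine card_le_card (image_subset_iff.2 fun T hT ↦ ?_)
        have hT := mem_powerset.1 hT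
        have hPT := union_inter_Icc_eq hP hT
        obtain ⟨hhit, htime⟩ := hS₀.of_inter_Icc_hitTime_eq hPT
        refine mem_filter.2 ⟨mem_filter.2 ⟨mem_powerset.2 (union_subset ?_ ?_), hhit⟩, ?_⟩
        · exact hP.trans (Icc_subset_Icc_right hMn)
        · exact hT.trans (Icc_subset_Icc_left (Nat.le_add_left 1 M))
        · rw [hitPrefix, hitPrefix, htime, hPT]

lemma card_filter_hitPrefix_eq_mul_le {r t n k : ℕ} (hr : 3 ≤ r) (ht : 1 ≤ t) (hn : 2 * k ≤ n)
    {S₀ : Finset ℕ} (hS₀ : S₀ ∈ powersetCard k (Icc 1 n)) (hhit : HitsLine r t 0 n S₀) :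
    #{S ∈ {S ∈ powersetCard k (Icc 1 n) | HitsLine r t 0 n S} |
        hitPrefix r t S = hitPrefix r t S₀} * 2 ^ n ≤
      #{S ∈ {S ∈ (Icc 1 n).powerset | HitsLine r t 0 n S} |
        hitPrefix r t S = hitPrefix r t S₀} * n.choose k := by
  set M := hitTime r t S₀
  set P := S₀ ∩ Icc 1 M
  have hPk : #P ≤ k := (card_le_card inter_subset_left).trans (mem_powersetCard.1 hS₀).2.le
  have hPM : #P ≤ M := by simpa using card_le_card (inter_subset_right : P ⊆ Icc 1 M)
  obtain ⟨d, hMd⟩ := Nat.exists_eq_add_of_le hPM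
  have hd : 2 * d < #P := by
    have hline : (r - 1) * M + t ≤ r * #P := hhit.sub_one_mul_hitTime_add_le
    have h2d : 2 * d ≤ (r - 1) * d := Nat.mul_le_mul_right d (by omega)
    rw [hMd, mul_add, show r * #P = (r - 1) * #P + #P by
      rw [← add_one_mul, Nat.sub_add_cancel (by omega)]] at hline
    omega
  have hbin := two_pow_mul_choose_le_choose hn hPk hd
  rw [← hMd] at hbin
  have hfiber : #{S ∈ {S ∈ powersetCard k (Icc 1 n) | HitsLine r t 0 n S} |
      hitPrefix r t S = hitPrefix r t S₀} ≤ (n - M).choose (k - #P) := by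
    refine (card_le_card fun S hS ↦ ?_).trans (card_filter_inter_Icc_eq_le n k M P)
    obtain ⟨hS, hpre⟩ := mem_filter.1 hS
    obtain ⟨htime, hpre⟩ := Prod.ext_iff.1 hpre
    simp only [hitPrefix] at htime hpre
    rw [htime] at hpre
    exact mem_filter.2 ⟨(mem_filter.1 hS).1, hpre⟩
  calc _ ≤ (n - M).choose (k - #P) * (2 ^ (n - M) * 2 ^ M) := by
        rw [← pow_add, Nat.sub_add_cancel hhit.hitTime_le]
        exact Nat.mul_le_mul_right _ hfiber
    _ = 2 ^ (n - M) * (2 ^ M * (n - M).choose (k - #P)) := by ring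
    _ ≤ _ := Nat.mul_le_mul (two_pow_le_card_filter_hitPrefix_eq hhit) hbin

theorem card_filter_hitsLine_powersetCard_le {r t n k : ℕ} {α : ℝ} (hr : 3 ≤ r) (ht : 1 ≤ t)
    (hα : 0 ≤ α) (hαr : 1 + α ^ r = 2 * α) (hn : 2 * k ≤ n) :
    (#{S ∈ powersetCard k (Icc 1 n) | HitsLine r t 0 n S} : ℝ) ≤ α ^ t * n.choose k := by
  have hfiber : #{S ∈ powersetCard k (Icc 1 n) | HitsLine r t 0 n S} * 2 ^ n ≤
      #{S ∈ (Icc 1 n).powerset | HitsLine r t 0 n S} * n.choose k := by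
    refine card_mul_le_card_mul_of_forall_fiber (hitPrefix r t)
      (filter_subset_filter _ fun S hS ↦ mem_powerset.2 (mem_powersetCard.1 hS).1) fun y hy ↦ ?_
    obtain ⟨S₀, hS₀, rfl⟩ := mem_image.1 hy
    exact card_filter_hitPrefix_eq_mul_le hr ht hn (mem_filter.1 hS₀).1 (mem_filter.1 hS₀).2
  have hall : (#{S ∈ (Icc 1 n).powerset | HitsLine r t 0 n S} : ℝ) ≤ α ^ t * 2 ^ n := by
    simpa using card_filter_hitsLine_powerset_le (by omega) hα hαr n 0 t
  refine le_of_mul_le_mul_right ?_ (by positivity : (0 : ℝ) < 2 ^ n)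
  calc (#{S ∈ powersetCard k (Icc 1 n) | HitsLine r t 0 n S} : ℝ) * 2 ^ n
      ≤ #{S ∈ (Icc 1 n).powerset | HitsLine r t 0 n S} * n.choose k := by exact_mod_cast hfiber
    _ ≤ α ^ t * 2 ^ n * n.choose k := by gcongr
    _ = α ^ t * n.choose k * 2 ^ n := by ring

theorem rwise_intersecting_card_le_alpha_pow_general
    (r t : ℕ) (hr : 3 ≤ r) (ht : 1 ≤ t)
    (α : ℝ) (hα0 : 0 < α) (hαeq : α = 1 / 2 + α ^ r / 2)
    (n k : ℕ) (hn : 2 * k ≤ n)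
    (𝓕 : Finset (Finset ℕ))
    (h𝓕 : 𝓕 ⊆ Finset.powersetCard k (Finset.Icc 1 n))
    (hint : RwiseIntersecting r t 𝓕) :
    (𝓕.card : ℝ) ≤ α ^ t * (Nat.choose n k) := by
  obtain ⟨𝓖, h𝓖, hint𝓖, hcard, hshift⟩ := exists_shifted h𝓕 hint
  have hhits : 𝓖 ⊆ {S ∈ powersetCard k (Icc 1 n) | HitsLine r t 0 n S} := fun F hF ↦
    mem_filter.2 ⟨h𝓖 hF, hshift.hitsLine (by omega) ht hint𝓖 hF (mem_powersetCard.1 (h𝓖 hF)).1⟩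
  calc (𝓕.card : ℝ) = #𝓖 := by rw [hcard]
    _ ≤ #{S ∈ powersetCard k (Icc 1 n) | HitsLine r t 0 n S} := by
      exact_mod_cast card_le_card hhits
    _ ≤ α ^ t * n.choose k := card_filter_hitsLine_powersetCard_le hr ht hα0.le (by linarith) hn

theorem rwise_intersecting_card_le_alpha_pow
    (r t : ℕ) (hr : 3 ≤ r) (ht : 1 ≤ t)
    (α : ℝ) (hα0 : 0 < α) (hα1 : α < 1) (hαeq : α = 1 / 2 + α ^ r / 2)
    (n k : ℕ) (hn : 2 * k ≤ n)
    (𝓕 : Finset (Finset ℕ))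
    (h𝓕 : 𝓕 ⊆ Finset.powersetCard k (Finset.Icc 1 n))
    (hint : RwiseIntersecting r t 𝓕) :
    (𝓕.card : ℝ) ≤ α ^ t * (Nat.choose n k) :=
  rwise_intersecting_card_le_alpha_pow_general r t hr ht α hα0 hαeq n k hn 𝓕 h𝓕 hint
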